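/- arXiv:1911.03367 — 8 statements merged into one kernel-verified Lean document; each statement's English description precedes it below -/
import Mathlib

section
/- Let q be a symmetric bilinear form on a real vector space V and let D_1, ..., D_m be vectors such that q(D_i, D_j) ≥ 0 for all i ≠ j. Fix nonnegative reals a_1, ..., a_m and define M := { (b_1,...,b_m) ∈ [0,a_1] × ... × [0,a_m] : for all j, q(∑_i b_i D_i, D_j) ≥ 0 }. Then M is closed under taking coordinatewise maxima: if (b_{1,1},...,b_{1,m}) ∈ M and (b_{2,1},...,b_{2,m}) ∈ M, then (max{b_{1,1},b_{2,1}}, ..., max{b_{1,m},b_{2,m}}) ∈ M. -/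
theorem stmt_0 {V : Type*} [AddCommGroup V] [Module ℝ V]
    (q : V →ₗ[ℝ] V →ₗ[ℝ] ℝ) (hsymm : ∀ x y, q x y = q y x)
    {m : ℕ} (D : Fin m → V) (hD : ∀ i j, i ≠ j → 0 ≤ q (D i) (D j))
    (a : Fin m → ℝ) (ha : ∀ i, 0 ≤ a i)
    (M : Set (Fin m → ℝ))
    (hM : M = {b : Fin m → ℝ | (∀ i, b i ∈ Set.Icc 0 (a i)) ∧
      ∀ j, 0 ≤ q (∑ i, b i • D i) (D j)})
    (b₁ b₂ : Fin m → ℝ) (hb₁ : b₁ ∈ M) (hb₂ : b₂ ∈ M) :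
    (fun i => max (b₁ i) (b₂ i)) ∈ M := by
  subst hM
  obtain ⟨h₁box, h₁q⟩ := hb₁
  obtain ⟨h₂box, h₂q⟩ := hb₂
  have expand : ∀ c : Fin m → ℝ, ∀ j,
      q (∑ i, c i • D i) (D j) = ∑ i, c i * q (D i) (D j) := by
    intro c j
    rw [map_sum]
    simp
  refine ⟨fun i => ⟨le_max_of_le_left (h₁box i).1, max_le (h₁box i).2 (h₂box i).2⟩, ?_⟩
  intro j
  have key : ∀ b : Fin m → ℝ, 0 ≤ q (∑ i, b i • D i) (D j) →
      b j = max (b₁ j) (b₂ j) → (∀ i, b i ≤ max (b₁ i) (b₂ i)) →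
      0 ≤ q (∑ i, max (b₁ i) (b₂ i) • D i) (D j) := by
    intro b hq hbj hble
    rw [expand] at hq ⊢
    refine hq.trans (Finset.sum_le_sum fun i _ => ?_)
    rcases eq_or_ne i j with rfl | hij
    · rw [hbj]
    · exact mul_le_mul_of_nonneg_right (hble i) (hD i j hij)
  rcases le_total (b₂ j) (b₁ j) with h | h
  · exact key b₁ (h₁q j) (max_eq_left h).symm (fun i => le_max_left _ _)
  · exact key b₂ (h₂q j) (max_eq_right h).symm (fun i => le_max_right _ _)
end

section
/- Let q be a symmetric bilinear form on a real vector space and K_1, ..., K_m vectors with q(K_i, K_j) ≥ 0 for all i ≠ j. Suppose that for every choice of nonnegative coefficients c_1,...,c_m, not all zero, there exists an index j with q(∑_i c_i K_i, K_j) < 0. Then q(∑_i a_i K_i, ∑_i a_i K_i) < 0 for every choice of nonnegative coefficients a_1,...,a_m not all zero. -/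
set_option maxHeartbeats 1600000 in
theorem stmt_1 {V : Type*} [AddCommGroup V] [Module ℝ V]
    (q : V →ₗ[ℝ] V →ₗ[ℝ] ℝ) (hsymm : ∀ x y, q x y = q y x)
    {m : ℕ} (K : Fin m → V) (hK : ∀ i j, i ≠ j → 0 ≤ q (K i) (K j))
    (hneg : ∀ c : Fin m → ℝ, (∀ i, 0 ≤ c i) → c ≠ 0 →
      ∃ j, q (∑ i, c i • K i) (K j) < 0)
    (a : Fin m → ℝ) (ha : ∀ i, 0 ≤ a i) (ha0 : a ≠ 0) :
    q (∑ i, a i • K i) (∑ i, a i • K i) < 0 := by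
  classical
  -- the linear parametrization, made opaque
  obtain ⟨v, hv⟩ : ∃ v : (Fin m → ℝ) → V, v = fun c => ∑ i, c i • K i := ⟨_, rfl⟩
  have hvadd : ∀ c d : Fin m → ℝ, v (c + d) = v c + v d := by
    intro c d
    simp [hv, add_smul, Finset.sum_add_distrib]
  have hvsmul : ∀ (t : ℝ) (c : Fin m → ℝ), v (t • c) = t • v c := by
    intro t c
    simp [hv, smul_smul, Finset.smul_sum]
  obtain ⟨F, hF⟩ : ∃ F : (Fin m → ℝ) → ℝ, F = fun c => q (v c) (v c) := ⟨_, rfl⟩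
  -- expansion of q against a combination, in the second slot
  have hq1 : ∀ (x : V) (c : Fin m → ℝ), q x (v c) = ∑ j, c j * q x (K j) := by
    intro x c
    simp [hv, map_sum, map_smul, smul_eq_mul]
  have hq1' : ∀ (c : Fin m → ℝ) (x : V), q (v c) x = ∑ j, c j * q (K j) x := by
    intro c x
    rw [hsymm, hq1]
    exact Finset.sum_congr rfl fun j _ => by rw [hsymm]
  -- quadratic expansion in coordinates, for continuity
  have hFform : F = fun c => ∑ i, ∑ j, c i * (c j * q (K i) (K j)) := by
    funext c
    rw [hF]
    simp only
    rw [hq1' c (v c)]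
    refine Finset.sum_congr rfl fun i _ => ?_
    rw [hq1 (K i) c, Finset.mul_sum]
  have hcont : Continuous F := by
    rw [hFform]
    exact continuous_finset_sum _ fun i _ => continuous_finset_sum _ fun j _ =>
      (continuous_apply i).mul ((continuous_apply j).mul continuous_const)
  -- quadratic identity
  have hFexp : ∀ (c d : Fin m → ℝ) (t : ℝ),
      F (c + t • d) = F c + 2 * t * q (v c) (v d) + t ^ 2 * F d := by
    intro c d t
    simp only [hF]
    rw [hvadd, hvsmul]
    simp only [map_add, map_smul, LinearMap.add_apply, LinearMap.smul_apply, smul_eq_mul]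
    rw [hsymm (v d) (v c)]
    ring
  -- strengthened negativity: the witness lies in the support
  have hneg' : ∀ c : Fin m → ℝ, (∀ i, 0 ≤ c i) → c ≠ 0 →
      ∃ j, 0 < c j ∧ q (v c) (K j) < 0 := by
    intro c hc hc0
    obtain ⟨j, hj⟩ := hneg c hc hc0
    rw [show (∑ i, c i • K i) = v c by rw [hv]] at hj
    refine ⟨j, ?_, hj⟩
    rcases lt_or_eq_of_le (hc j) with h | h
    · exact h
    · exfalso
      have h0 : 0 ≤ q (v c) (K j) := by
        rw [hq1' c (K j)]
        refine Finset.sum_nonneg fun i _ => ?_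
        rcases eq_or_ne i j with rfl | hij
        · rw [← h]; simp
        · exact mul_nonneg (hc i) (hK i j hij)
      exact absurd hj (not_lt.mpr h0)
  -- the simplex
  set Δ : Set (Fin m → ℝ) := {c | (∀ i, 0 ≤ c i) ∧ ∑ i, c i = 1} with hΔ
  have hΔclosed : IsClosed Δ := by
    have h1 : IsClosed {c : Fin m → ℝ | ∀ i, 0 ≤ c i} := by
      have : {c : Fin m → ℝ | ∀ i, 0 ≤ c i} = ⋂ i, {c : Fin m → ℝ | 0 ≤ c i} := by
        ext c; simp
      rw [this]
      exact isClosed_iInter fun i =>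
        isClosed_le continuous_const (continuous_apply i)
    have h2 : IsClosed {c : Fin m → ℝ | ∑ i, c i = 1} :=
      isClosed_eq (continuous_finset_sum _ fun i _ => continuous_apply i) continuous_const
    have : Δ = {c : Fin m → ℝ | ∀ i, 0 ≤ c i} ∩ {c : Fin m → ℝ | ∑ i, c i = 1} := by
      ext c; simp [hΔ]
    rw [this]
    exact h1.inter h2
  have hΔsub : Δ ⊆ Set.Icc (0 : Fin m → ℝ) 1 := by
    rintro c ⟨hc0, hc1⟩
    constructor
    · intro i; exact hc0 i
    · intro i
      calc c i ≤ ∑ j, c j := Finset.single_le_sum (fun j _ => hc0 j) (Finset.mem_univ i)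
        _ = 1 := hc1
  have hΔcomp : IsCompact Δ := (isCompact_Icc).of_isClosed_subset hΔclosed hΔsub
  -- Δ is nonempty: m > 0 since a ≠ 0
  obtain ⟨i0, hi0⟩ : ∃ i, a i ≠ 0 := by
    by_contra h
    push_neg at h
    exact ha0 (funext h)
  have hΔne : Δ.Nonempty := by
    refine ⟨fun i => if i = i0 then 1 else 0, fun i => by positivity, ?_⟩
    simp
  obtain ⟨cs, hcsΔ, hmax⟩ := hΔcomp.exists_isMaxOn hΔne hcont.continuousOn
  obtain ⟨hcs0, hcs1⟩ := hcsΔ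
  -- the maximum value is negative
  have hFcs : F cs < 0 := by
    by_contra hge
    push_neg at hge
    have hcsne : cs ≠ 0 := by
      intro h
      rw [h] at hcs1
      simp at hcs1
    obtain ⟨k, hk0, hkneg⟩ := hneg' cs hcs0 hcsne
    -- there is j with F cs < q (v cs) (K j)
    have hj : ∃ j, F cs < q (v cs) (K j) := by
      by_contra h
      push_neg at h
      have key : F cs < F cs := by
        have hFsum : F cs = ∑ j, cs j * q (v cs) (K j) := by
          rw [hF]; exact hq1 (v cs) cs
        have hlt : ∑ j, cs j * q (v cs) (K j) < ∑ j, cs j * F cs := by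
          refine Finset.sum_lt_sum (fun j _ => mul_le_mul_of_nonneg_left (h j) (hcs0 j))
            ⟨k, Finset.mem_univ k, ?_⟩
          exact mul_lt_mul_of_pos_left (lt_of_lt_of_le hkneg hge) hk0
        calc F cs = ∑ j, cs j * q (v cs) (K j) := hFsum
          _ < ∑ j, cs j * F cs := hlt
          _ = (∑ j, cs j) * F cs := by rw [Finset.sum_mul]
          _ = F cs := by rw [hcs1, one_mul]
      exact lt_irrefl _ key
    obtain ⟨j, hjgt⟩ := hj
    have hjk : j ≠ k := by
      intro h
      rw [h] at hjgt
      linarith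
    -- the perturbation direction
    obtain ⟨d, hd⟩ : ∃ d : Fin m → ℝ,
        d = fun i => (if i = j then (1 : ℝ) else 0) - (if i = k then 1 else 0) := ⟨_, rfl⟩
    have hvd : v d = K j - K k := by
      simp only [hv, hd, sub_smul, Finset.sum_sub_distrib]
      congr 1
      · simp [ite_smul, Finset.sum_ite_eq']
      · simp [ite_smul, Finset.sum_ite_eq']
    have hdsum : ∑ i, d i = 0 := by
      simp [hd, Finset.sum_sub_distrib, Finset.sum_ite_eq']
    obtain ⟨L, hL⟩ : ∃ L : ℝ, L = q (v cs) (K j) - q (v cs) (K k) := ⟨_, rfl⟩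
    have hLpos : 0 < L := by
      rw [hL]
      linarith
    obtain ⟨Q, hQ⟩ : ∃ Q : ℝ, Q = F d := ⟨_, rfl⟩
    obtain ⟨t, ht⟩ : ∃ t : ℝ, t = min (cs k) (L / (|Q| + 1)) := ⟨_, rfl⟩
    have htpos : 0 < t := by
      rw [ht]
      exact lt_min hk0 (div_pos hLpos (by positivity))
    have htk : t ≤ cs k := by
      rw [ht]; exact min_le_left _ _
    have htQ : t * |Q| ≤ L := by
      have h1 : t ≤ L / (|Q| + 1) := by rw [ht]; exact min_le_right _ _
      have h2 : t * |Q| ≤ (L / (|Q| + 1)) * |Q| :=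
        mul_le_mul_of_nonneg_right h1 (abs_nonneg Q)
      have h3 : (L / (|Q| + 1)) * |Q| ≤ L := by
        rw [div_mul_eq_mul_div, div_le_iff₀ (by positivity)]
        nlinarith [abs_nonneg Q, hLpos]
      linarith
    -- the perturbed point
    obtain ⟨c', hc'⟩ : ∃ c' : Fin m → ℝ, c' = cs + t • d := ⟨_, rfl⟩
    have hc'Δ : c' ∈ Δ := by
      rw [hc']
      constructor
      · intro i
        simp only [hd, Pi.add_apply, Pi.smul_apply, smul_eq_mul]
        rcases eq_or_ne i j with rfl | hij
        · rw [if_pos rfl, if_neg hjk]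
          have := hcs0 i
          nlinarith
        · rw [if_neg hij]
          rcases eq_or_ne i k with rfl | hik
          · rw [if_pos rfl]
            have := htk
            nlinarith
          · rw [if_neg hik]
            have := hcs0 i
            nlinarith
      · have hsplit : ∑ i, (cs i + t * d i) = ∑ i, cs i + t * ∑ i, d i := by
          rw [Finset.sum_add_distrib, Finset.mul_sum]
        simp only [Pi.add_apply, Pi.smul_apply, smul_eq_mul]
        rw [hsplit, hdsum, hcs1]
        ring
    -- F strictly increases at c', contradiction with maximality
    have hcross : q (v cs) (v d) = L := by
      rw [hvd, map_sub, hL]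
    have hFc' : F c' = F cs + 2 * t * L + t ^ 2 * Q := by
      rw [hc', hFexp cs d t, hcross, hQ]
    have hgain : F cs < F c' := by
      rw [hFc']
      have hQge : t ^ 2 * Q ≥ -(t * L) := by
        have h1 : t ^ 2 * Q ≥ -(t ^ 2 * |Q|) := by
          nlinarith [neg_abs_le Q, sq_nonneg t]
        have h2 : t ^ 2 * |Q| ≤ t * L := by
          have h4 : t * (t * |Q|) ≤ t * L := mul_le_mul_of_nonneg_left htQ htpos.le
          nlinarith
        linarith
      nlinarith [mul_pos htpos hLpos]
    exact absurd (hmax hc'Δ) (not_le.mpr hgain)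
  -- conclude for a by scaling
  have hs : 0 < ∑ i, a i :=
    Finset.sum_pos' (fun i _ => ha i) ⟨i0, Finset.mem_univ i0, (ha i0).lt_of_ne (Ne.symm hi0)⟩
  set s : ℝ := ∑ i, a i with hsdef
  have haΔ : (s⁻¹ • a) ∈ Δ := by
    constructor
    · intro i
      exact mul_nonneg (inv_nonneg.mpr hs.le) (ha i)
    · simp only [Pi.smul_apply, smul_eq_mul]
      rw [← Finset.mul_sum, ← hsdef, inv_mul_cancel₀ hs.ne']
  have hFa : F a = s ^ 2 * F (s⁻¹ • a) := by
    have hrepr : a = s • (s⁻¹ • a) := by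
      rw [smul_smul, mul_inv_cancel₀ hs.ne', one_smul]
    rw [hF]
    simp only
    conv_lhs => rw [hrepr]
    rw [hvsmul]
    simp only [map_smul, LinearMap.smul_apply, smul_eq_mul]
    ring
  have hfin : F a < 0 := by
    rw [hFa]
    exact mul_neg_of_pos_of_neg (pow_pos hs 2) (lt_of_le_of_lt (hmax haΔ) hFcs)
  have hgoal : F a = q (∑ i, a i • K i) (∑ i, a i • K i) := by
    rw [hF, hv]
  rw [← hgoal]
  exact hfin
end

section
/- Let q be a symmetric bilinear form on a real vector space and K_1, ..., K_m vectors with q(K_i, K_j) ≥ 0 for all i ≠ j. Suppose that for every choice of nonnegative coefficients c_1,...,c_m, not all zero, there exists an index j with q(∑_i c_i K_i, K_j) < 0. Then there exist strictly positive reals d_1,...,d_m with ∑_i d_i = 1 such that q(∑_i d_i K_i, K_j) < 0 for every index j ∈ {1,...,m}. -/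
/-!
The hypothesis says that the image of the standard simplex under `c ↦ c ᵥ* G`, where
`G i j = q (K i) (K j)` is the Gram matrix, misses the nonnegative orthant. Separating this compact
convex set from the closed convex orthant yields `y ≥ 0` with `G *ᵥ y < 0` (Ville's alternative).
Every `y i` is then positive, since otherwise `(G *ᵥ y) i = ∑_{j ≠ i} G i j * y j ≥ 0`, and as
`G` is symmetric, `d = y / ∑ y` is the required convex combination.
-/

open Matrix

theorem map_nonneg_of_forall_nonneg_lt {E F : Type*} [AddCommGroup E] [PartialOrder E]
    [Module ℝ E] [PosSMulMono ℝ E] [FunLike F E ℝ] [LinearMapClass F ℝ E ℝ] (f : F) {v : ℝ}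
    (hv : ∀ t, 0 ≤ t → v < f t) {t : E} (ht : 0 ≤ t) : 0 ≤ f t := by
  by_contra! hft
  set r := (|v| + 1) / -f t
  have hr : 0 < r := div_pos (by positivity) (neg_pos.2 hft)
  have hscaled : f (r • t) = -(|v| + 1) := by
    rw [map_smul, smul_eq_mul, div_mul_eq_mul_div, div_neg, mul_div_cancel_right₀ _ hft.ne]
  linarith [hv (r • t) (smul_nonneg hr.le ht), neg_abs_le v]

theorem LinearMap.apply_eq_dotProduct_single {ι F : Type*} [Fintype ι] [DecidableEq ι]
    [FunLike F (ι → ℝ) ℝ] [LinearMapClass F ℝ (ι → ℝ) ℝ] (f : F) (x : ι → ℝ) :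
    f x = x ⬝ᵥ fun j => f (Pi.single j 1) := by
  conv_lhs => rw [← Finset.univ_sum_single x]
  simp only [map_sum, dotProduct]
  refine Finset.sum_congr rfl fun j _ => ?_
  rw [← smul_eq_mul, ← map_smul, ← Pi.single_smul, smul_eq_mul, mul_one]

theorem Matrix.exists_nonneg_mulVec_neg {ι κ : Type*} [Fintype ι] [Fintype κ]
    (A : Matrix ι κ ℝ) (h : ∀ c ∈ stdSimplex ℝ ι, ∃ j, (c ᵥ* A) j < 0) :
    ∃ y : κ → ℝ, 0 ≤ y ∧ ∀ i, (A *ᵥ y) i < 0 := by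
  classical
  have hdisj : Disjoint (A.vecMulLinear '' stdSimplex ℝ ι) (Set.Ici 0) := by
    rw [Set.disjoint_left]
    rintro _ ⟨c, hc, rfl⟩ hnonneg
    obtain ⟨j, hj⟩ := h c hc
    exact hj.not_ge (hnonneg j)
  obtain ⟨f, u, v, hfu, huv, hfv⟩ := geometric_hahn_banach_compact_closed
    ((convex_stdSimplex ℝ ι).linear_image _)
    ((isCompact_stdSimplex ℝ ι).image A.vecMulLinear.continuous_of_finiteDimensional)
    (convex_Ici 0) isClosed_Ici hdisj
  have hf : ∀ t : κ → ℝ, 0 ≤ t → 0 ≤ f t := fun t => map_nonneg_of_forall_nonneg_lt f hfv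
  refine ⟨fun j => f (Pi.single j 1), fun j => hf _ (Pi.single_nonneg.2 zero_le_one), fun i => ?_⟩
  have hrow : A.vecMulLinear (Pi.single i 1) = A.row i := single_one_vecMul i A
  calc (A *ᵥ fun j => f (Pi.single j 1)) i = f (A.row i) :=
        (LinearMap.apply_eq_dotProduct_single f _).symm
    _ < u := hrow ▸ hfu _ ⟨_, single_mem_stdSimplex ℝ i, rfl⟩
    _ < v := huv
    _ < f 0 := hfv 0 Set.self_mem_Ici
    _ = 0 := map_zero f

theorem Matrix.pos_of_mulVec_neg {ι R : Type*} [Fintype ι] [Semiring R] [PartialOrder R]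
    [IsOrderedRing R] {A : Matrix ι ι R} {y : ι → R} {i : ι} (hA : ∀ j, j ≠ i → 0 ≤ A i j)
    (hy : 0 ≤ y) (h : (A *ᵥ y) i < 0) : 0 < y i := by
  refine (hy i).lt_of_ne fun hyi => h.not_ge (Finset.sum_nonneg fun j _ => ?_)
  rcases eq_or_ne j i with rfl | hj
  · simp [← hyi]
  · exact mul_nonneg (hA j hj) (hy j)

section GramMatrix

variable {R M ι : Type*} [CommSemiring R] [AddCommMonoid M] [Module R M]

def LinearMap.gramMatrix (q : M →ₗ[R] M →ₗ[R] R) (K : ι → M) : Matrix ι ι R :=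
  Matrix.of fun i j => q (K i) (K j)

theorem LinearMap.gramMatrix_isSymm {q : M →ₗ[R] M →ₗ[R] R} (hq : ∀ x y, q x y = q y x)
    (K : ι → M) : (q.gramMatrix K).IsSymm :=
  Matrix.ext fun i j => hq (K j) (K i)

theorem LinearMap.apply_sum_smul_eq_vecMul_gramMatrix [Fintype ι] (q : M →ₗ[R] M →ₗ[R] R)
    (K : ι → M) (c : ι → R) (j : ι) : q (∑ i, c i • K i) (K j) = (c ᵥ* q.gramMatrix K) j := by
  simp [gramMatrix, vecMul, dotProduct]

end GramMatrix

theorem stmt_2 {V : Type*} [AddCommGroup V] [Module ℝ V]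
    (q : V →ₗ[ℝ] V →ₗ[ℝ] ℝ) (hsymm : ∀ x y, q x y = q y x)
    {m : ℕ} (hm : 0 < m) (K : Fin m → V) (hK : ∀ i j, i ≠ j → 0 ≤ q (K i) (K j))
    (hneg : ∀ c : Fin m → ℝ, (∀ i, 0 ≤ c i) → c ≠ 0 →
      ∃ j, q (∑ i, c i • K i) (K j) < 0) :
    ∃ d : Fin m → ℝ, (∀ i, 0 < d i) ∧ (∑ i, d i) = 1 ∧
      ∀ j, q (∑ i, d i • K i) (K j) < 0 := by
  have : Nonempty (Fin m) := Fin.pos_iff_nonempty.mp hm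
  set G := q.gramMatrix K
  simp only [q.apply_sum_smul_eq_vecMul_gramMatrix] at hneg ⊢
  obtain ⟨y, hy, hGy⟩ := G.exists_nonneg_mulVec_neg fun c hc =>
    hneg c hc.1 fun hc0 => by simpa [hc0] using hc.2
  have hypos : ∀ i, 0 < y i := fun i => G.pos_of_mulVec_neg (fun j hj => hK i j hj.symm) hy (hGy i)
  have hsum : 0 < ∑ i, y i := Finset.sum_pos (fun i _ => hypos i) Finset.univ_nonempty
  refine ⟨(∑ i, y i)⁻¹ • y, fun i => mul_pos (inv_pos.2 hsum) (hypos i), ?_, fun j => ?_⟩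
  · simp [← Finset.mul_sum, hsum.ne']
  · rw [smul_vecMul, ← (q.gramMatrix_isSymm hsymm K).eq, vecMul_transpose]
    exact mul_neg_of_pos_of_neg (inv_pos.2 hsum) (hGy j)
end

section
/- Let q be a symmetric bilinear form on a finite-dimensional rational vector space V, let D_1,...,D_m ∈ V with q(D_i,D_j) ≥ 0 for i ≠ j, and let D = ∑_i a_i D_i with all a_i > 0 rational. Then there exist unique P and N in V of the form P = ∑_i b_i D_i, N = ∑_i c_i D_i with rational b_i, c_i ≥ 0, such that: (1) D = P + N; (2) q(P, D_j) ≥ 0 for all j; (3) the Gram matrix of q restricted to the set of D_i with c_i > 0 is negative definite (or N = 0); and (4) q(P, N) = 0. -/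
/-!
Over `ℝ`, take for the positive part a vector `P` maximising the coefficient sum on the compact set
`{P | 0 ≤ P ≤ a, G P ≥ 0}`. Because the off-diagonal entries of `G` are nonnegative,
such a vector can be pushed up along any direction `z ≥ 0` supported where `P < a` with `G z ≥ 0`.
Maximality therefore forces `(G P)ⱼ = 0` where `Pⱼ < aⱼ`, which is the orthogonality, and it rules
out such a `z`, which a maximiser of the quadratic form on a simplex would provide if `G` were not
negative definite on `{P < a}`. On that set `P` solves a linear system with rational coefficients
and negative definite, hence invertible, matrix, so `P` is rational.

For uniqueness, two decompositions give `x = N' - N = P - P'` with `xᵀ G x ≥ 0` by nefness and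
orthogonality, while `x⁺` and `x⁻` are supported where `N'`, resp. `N`, is positive and
`xᵀ G x ≤ x⁺ᵀ G x⁺ + x⁻ᵀ G x⁻`; negative definiteness then forces `x⁺ = x⁻ = 0`.
-/

open Matrix Filter Topology

theorem tendsto_add_mul_nhdsGT (u v : ℝ) :
    Tendsto (fun ε : ℝ => u + ε * v) (𝓝[>] 0) (𝓝 u) := by
  have : Continuous fun ε : ℝ => u + ε * v := by fun_prop
  simpa using (this.tendsto 0).mono_left nhdsWithin_le_nhds

theorem nonpos_of_forall_mul_add_sq_mul_nonpos {L C : ℝ}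
    (h : ∀ t ∈ Set.Ioc (0 : ℝ) 1, t * L + t ^ 2 * C ≤ 0) : L ≤ 0 := by
  refine le_of_tendsto (tendsto_add_mul_nhdsGT L C) ?_
  filter_upwards [Ioc_mem_nhdsGT one_pos] with t ht
  refine nonpos_of_mul_nonpos_left (b := t) ?_ ht.1
  linarith [h t ht]

theorem convex_setOf_support_subset {ι : Type*} (s : Set ι) :
    Convex ℝ {w : ι → ℝ | ∀ i, w i ≠ 0 → i ∈ s} := fun x hx y hy a b _ _ _ i hi =>
  not_not.1 fun his => hi (by simp [not_imp_comm.1 (hx i) his, not_imp_comm.1 (hy i) his])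

theorem isClosed_setOf_support_subset {ι : Type*} (s : Set ι) :
    IsClosed {w : ι → ℝ | ∀ i, w i ≠ 0 → i ∈ s} := by
  simp only [Set.ofPred_forall, imp_iff_not_or, not_not, Set.ofPred_or]
  exact isClosed_iInter fun i =>
    (isClosed_eq (continuous_apply i) continuous_const).union isClosed_const

namespace Matrix

variable {ι K : Type*} [Fintype ι]

theorem IsSymm.dotProduct_mulVec_comm [CommSemiring K] {G : Matrix ι ι K} (hG : G.IsSymm)
    (x y : ι → K) : x ⬝ᵥ G *ᵥ y = y ⬝ᵥ G *ᵥ x := by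
  rw [dotProduct_mulVec, ← vecMul_transpose, hG.eq, dotProduct_comm]

def NegDefOn [CommRing K] [PartialOrder K] (G : Matrix ι ι K) (s : Set ι) : Prop :=
  ∀ x : ι → K, (∀ i, x i ≠ 0 → i ∈ s) → x ≠ 0 → x ⬝ᵥ G *ᵥ x < 0

namespace NegDefOn

variable [CommRing K] [PartialOrder K] {G : Matrix ι ι K} {s : Set ι}

theorem dotProduct_mulVec_nonpos (h : G.NegDefOn s) {x : ι → K} (hx : ∀ i, x i ≠ 0 → i ∈ s) :
    x ⬝ᵥ G *ᵥ x ≤ 0 := by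
  rcases eq_or_ne x 0 with rfl | hx0
  · simp
  · exact (h x hx hx0).le

theorem eq_zero_of_nonneg (h : G.NegDefOn s) {x : ι → K} (hx : ∀ i, x i ≠ 0 → i ∈ s)
    (hQ : 0 ≤ x ⬝ᵥ G *ᵥ x) : x = 0 :=
  not_not.1 fun hx0 => (h x hx hx0).not_ge hQ

theorem eq_of_eqOn_compl_of_mulVec_eqOn (h : G.NegDefOn s) {x y : ι → K}
    (hxy : ∀ i ∉ s, x i = y i) (hGxy : ∀ i ∈ s, (G *ᵥ x) i = (G *ᵥ y) i) : x = y := by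
  have hd : ∀ i, (x - y) i ≠ 0 → i ∈ s := fun i hi =>
    not_not.1 fun his => hi (sub_eq_zero.2 (hxy i his))
  have hQ : (x - y) ⬝ᵥ G *ᵥ (x - y) = 0 := Finset.sum_eq_zero fun i _ => by
    by_cases his : i ∈ s
    · simp [mulVec_sub, hGxy i his]
    · simp [hxy i his]
  exact sub_eq_zero.1 (h.eq_zero_of_nonneg hd hQ.ge)

end NegDefOn

section OrderedRing

variable [CommRing K] [LinearOrder K] [IsStrictOrderedRing K] {G : Matrix ι ι K} {s : Set ι}

theorem mulVec_apply_nonneg_of_apply_eq_zero (hG : ∀ i j, i ≠ j → 0 ≤ G i j) {z : ι → K}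
    (hz : 0 ≤ z) {k : ι} (hzk : z k = 0) : 0 ≤ (G *ᵥ z) k :=
  Finset.sum_nonneg fun j _ => by
    by_cases hkj : k = j
    · simp [← hkj, hzk]
    · exact mul_nonneg (hG k j hkj) (hz j)

theorem dotProduct_mulVec_nonneg_of_disjoint (hG : ∀ i j, i ≠ j → 0 ≤ G i j) {x y : ι → K}
    (hx : 0 ≤ x) (hy : 0 ≤ y) (hxy : ∀ i, x i = 0 ∨ y i = 0) : 0 ≤ x ⬝ᵥ G *ᵥ y :=
  Finset.sum_nonneg fun i _ => by
    rcases hxy i with h | h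
    · simp [h]
    · exact mul_nonneg (hx i) (mulVec_apply_nonneg_of_apply_eq_zero hG hy h)

theorem dotProduct_mulVec_le_posPart_add_negPart (hG : ∀ i j, i ≠ j → 0 ≤ G i j) (x : ι → K) :
    x ⬝ᵥ G *ᵥ x ≤ x⁺ ⬝ᵥ G *ᵥ x⁺ + x⁻ ⬝ᵥ G *ᵥ x⁻ := by
  have hdisj : ∀ i, x⁺ i = 0 ∨ x⁻ i = 0 := fun i => by
    simp only [Pi.posPart_apply, Pi.negPart_apply, posPart_eq_zero, negPart_eq_zero]
    exact le_total _ _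
  have h₁ := dotProduct_mulVec_nonneg_of_disjoint hG (posPart_nonneg x) (negPart_nonneg x) hdisj
  have h₂ := dotProduct_mulVec_nonneg_of_disjoint hG (negPart_nonneg x) (posPart_nonneg x)
    fun i => (hdisj i).symm
  conv_lhs => rw [← posPart_sub_negPart x]
  simp only [mulVec_sub, dotProduct_sub, sub_dotProduct]
  linarith

theorem negDefOn_of_nonneg (hG : ∀ i j, i ≠ j → 0 ≤ G i j)
    (h : ∀ x : ι → K, 0 ≤ x → (∀ i, x i ≠ 0 → i ∈ s) → x ≠ 0 → x ⬝ᵥ G *ᵥ x < 0) :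
    G.NegDefOn s := by
  have hnonpos : ∀ x : ι → K, 0 ≤ x → (∀ i, x i ≠ 0 → i ∈ s) → x ⬝ᵥ G *ᵥ x ≤ 0 :=
    fun x hx hxs => by
      rcases eq_or_ne x 0 with rfl | hx0
      · simp
      · exact (h x hx hxs hx0).le
  intro x hxs hx0
  have hpos : ∀ i, x⁺ i ≠ 0 → i ∈ s := fun i hi =>
    hxs i fun h0 => hi (by simp [Pi.posPart_apply, h0])
  have hneg : ∀ i, x⁻ i ≠ 0 → i ∈ s := fun i hi =>
    hxs i fun h0 => hi (by simp [Pi.negPart_apply, h0])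
  refine (dotProduct_mulVec_le_posPart_add_negPart hG x).trans_lt ?_
  rcases eq_or_ne x⁺ 0 with hp | hp
  · have hn : x⁻ ≠ 0 := fun hn => hx0 (by rw [← posPart_sub_negPart x, hp, hn, sub_zero])
    simpa [hp] using h _ (negPart_nonneg x) hneg hn
  · exact add_neg_of_neg_of_nonpos (h _ (posPart_nonneg x) hpos hp)
      (hnonpos _ (negPart_nonneg x) hneg)

end OrderedRing

structure IsZariskiDecomposition [CommRing K] [PartialOrder K] (G : Matrix ι ι K) (A P N : ι → K) :
    Prop where
  nonneg_left : 0 ≤ P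
  nonneg_right : 0 ≤ N
  add_eq : P + N = A
  nef : 0 ≤ G *ᵥ P
  negDefOn : G.NegDefOn {i | 0 < N i}
  orthogonal : P ⬝ᵥ G *ᵥ N = 0

namespace IsZariskiDecomposition

variable [CommRing K] [LinearOrder K] [IsStrictOrderedRing K] {G : Matrix ι ι K} {A P N : ι → K}

theorem mulVec_apply_eq_zero (hGs : G.IsSymm) (h : G.IsZariskiDecomposition A P N) {j : ι}
    (hj : 0 < N j) : (G *ᵥ P) j = 0 := by
  have hterms : ∀ i ∈ Finset.univ, 0 ≤ N i * (G *ᵥ P) i := fun i _ =>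
    mul_nonneg (h.nonneg_right i) (h.nef i)
  have hsum : ∑ i, N i * (G *ᵥ P) i = 0 := by
    rw [← h.orthogonal, hGs.dotProduct_mulVec_comm]
    rfl
  have := (Finset.sum_eq_zero_iff_of_nonneg hterms).1 hsum j (Finset.mem_univ j)
  exact (mul_eq_zero.1 this).resolve_left hj.ne'

theorem unique (hGs : G.IsSymm) (hG : ∀ i j, i ≠ j → 0 ≤ G i j)
    {P' N' : ι → K} (h : G.IsZariskiDecomposition A P N) (h' : G.IsZariskiDecomposition A P' N') :
    P = P' ∧ N = N' := by
  set x := N' - N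
  have hPx : P - P' = x := by
    rw [sub_eq_sub_iff_add_eq_add, h.add_eq, add_comm, h'.add_eq]
  have hcross : ∀ {P₁ N₂ : ι → K}, 0 ≤ G *ᵥ P₁ → 0 ≤ N₂ → 0 ≤ P₁ ⬝ᵥ G *ᵥ N₂ :=
    fun hP hN => by rw [hGs.dotProduct_mulVec_comm]; exact dotProduct_nonneg_of_nonneg hN hP
  have hQ : 0 ≤ x ⬝ᵥ G *ᵥ x := by
    have := hcross h.nef h'.nonneg_right
    have := hcross h'.nef h.nonneg_right
    nth_rewrite 1 [← hPx]
    simp only [x, mulVec_sub, dotProduct_sub, sub_dotProduct, h.orthogonal, h'.orthogonal]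
    linarith
  have hpos : ∀ i, x⁺ i ≠ 0 → 0 < N' i := fun i hi => by
    have : N i < N' i := by simpa [x, Pi.posPart_apply, posPart_eq_zero] using hi
    exact (h.nonneg_right i).trans_lt this
  have hneg : ∀ i, x⁻ i ≠ 0 → 0 < N i := fun i hi => by
    have : N' i < N i := by simpa [x, Pi.negPart_apply, negPart_eq_zero] using hi
    exact (h'.nonneg_right i).trans_lt this
  have hQpos := h'.negDefOn.dotProduct_mulVec_nonpos hpos
  have hQneg := h.negDefOn.dotProduct_mulVec_nonpos hneg
  have hQsum := dotProduct_mulVec_le_posPart_add_negPart hG x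
  have hxpos : x⁺ = 0 := h'.negDefOn.eq_zero_of_nonneg hpos (by linarith)
  have hxneg : x⁻ = 0 := h.negDefOn.eq_zero_of_nonneg hneg (by linarith)
  have hx : x = 0 := by rw [← posPart_sub_negPart x, hxpos, hxneg, sub_zero]
  exact ⟨sub_eq_zero.1 (hPx.trans hx), (sub_eq_zero.1 hx).symm⟩

end IsZariskiDecomposition

theorem _root_.IsMaxOn.dotProduct_mulVec_sub_nonpos {G : Matrix ι ι ℝ} (hGs : G.IsSymm)
    {C : Set (ι → ℝ)} (hC : Convex ℝ C) {w y : ι → ℝ} (hw : w ∈ C) (hy : y ∈ C)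
    (hmax : IsMaxOn (fun x => x ⬝ᵥ G *ᵥ x) C w) : (y - w) ⬝ᵥ G *ᵥ w ≤ 0 := by
  suffices 2 * ((y - w) ⬝ᵥ G *ᵥ w) ≤ 0 by linarith
  refine nonpos_of_forall_mul_add_sq_mul_nonpos (C := (y - w) ⬝ᵥ G *ᵥ (y - w)) fun t ht => ?_
  have := isMaxOn_iff.1 hmax _ (hC.add_smul_sub_mem hw hy (Set.Ioc_subset_Icc_self ht))
  simp only [mulVec_add, mulVec_smul, dotProduct_add, add_dotProduct, dotProduct_smul,
    smul_dotProduct, smul_eq_mul, hGs.dotProduct_mulVec_comm w (y - w)] at this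
  linarith

/-- At a maximiser `w` of the quadratic form on the simplex of vectors supported in `s`, the
first-order conditions give `(G w)ⱼ ≤ wᵀ G w` for `j ∈ s`; weighted by `wⱼ` they sum to an
equality, so `(G w)ⱼ = wᵀ G w ≥ 0` wherever `wⱼ > 0`. -/
theorem nonneg_mulVec_of_isMaxOn_stdSimplex {G : Matrix ι ι ℝ} (hGs : G.IsSymm)
    (hG : ∀ i j, i ≠ j → 0 ≤ G i j) {s : Set ι} {w : ι → ℝ}
    (hw : w ∈ stdSimplex ℝ ι ∩ {w | ∀ i, w i ≠ 0 → i ∈ s})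
    (hmax : IsMaxOn (fun x => x ⬝ᵥ G *ᵥ x) (stdSimplex ℝ ι ∩ {w | ∀ i, w i ≠ 0 → i ∈ s}) w)
    (hQ : 0 ≤ w ⬝ᵥ G *ᵥ w) : 0 ≤ G *ᵥ w := by
  classical
  have hkkt : ∀ j ∈ s, (G *ᵥ w) j ≤ w ⬝ᵥ G *ᵥ w := fun j hj => by
    have hj : Pi.single j 1 ∈ stdSimplex ℝ ι ∩ {w | ∀ i, w i ≠ 0 → i ∈ s} :=
      ⟨single_mem_stdSimplex ℝ j, fun i hi => by
        rcases eq_or_ne i j with rfl | hij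
        · exact hj
        · simp [hij] at hi⟩
    have := hmax.dotProduct_mulVec_sub_nonpos hGs
      ((convex_stdSimplex ℝ ι).inter (convex_setOf_support_subset s)) hw hj
    rw [sub_dotProduct, single_dotProduct, one_mul] at this
    linarith
  have hnonpos : (fun j => w j * ((G *ᵥ w) j - w ⬝ᵥ G *ᵥ w)) ≤ 0 := fun j => by
    by_cases hj : w j = 0
    · simp [hj]
    · exact mul_nonpos_of_nonneg_of_nonpos (hw.1.1 j) (sub_nonpos.2 (hkkt j (hw.2 j hj)))
  have hsum : ∑ j, w j * ((G *ᵥ w) j - w ⬝ᵥ G *ᵥ w) = 0 := by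
    simp only [mul_sub, Finset.sum_sub_distrib, ← Finset.sum_mul, hw.1.2, one_mul]
    exact sub_self _
  intro k
  by_cases hk : w k = 0
  · exact mulVec_apply_nonneg_of_apply_eq_zero hG hw.1.1 hk
  · have := congrFun ((Fintype.sum_eq_zero_iff_of_nonpos hnonpos).1 hsum) k
    have := (mul_eq_zero.1 this).resolve_left hk
    rw [Pi.zero_apply]
    linarith

theorem exists_nonneg_ne_zero_nonneg_mulVec {G : Matrix ι ι ℝ} (hGs : G.IsSymm)
    (hG : ∀ i j, i ≠ j → 0 ≤ G i j) {s : Set ι} {z : ι → ℝ} (hz : 0 ≤ z) (hz0 : z ≠ 0)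
    (hzs : ∀ i, z i ≠ 0 → i ∈ s) (hQ : 0 ≤ z ⬝ᵥ G *ᵥ z) :
    ∃ w : ι → ℝ, 0 ≤ w ∧ w ≠ 0 ∧ (∀ i, w i ≠ 0 → i ∈ s) ∧ 0 ≤ G *ᵥ w := by
  have hsum : 0 < ∑ i, z i := Fintype.sum_pos (hz.lt_of_ne' hz0)
  set c := (∑ i, z i)⁻¹
  have hc : 0 < c := inv_pos.2 hsum
  have hcz : c • z ∈ stdSimplex ℝ ι ∩ {w | ∀ i, w i ≠ 0 → i ∈ s} := by
    refine ⟨⟨fun i => smul_nonneg hc.le (hz i), ?_⟩, fun i hi => hzs i ?_⟩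
    · simp [c, ← Finset.mul_sum, hsum.ne']
    · rw [Pi.smul_apply, smul_eq_mul] at hi
      exact right_ne_zero_of_mul hi
  obtain ⟨w, hw, hmax⟩ := ((isCompact_stdSimplex ℝ ι).inter_right
    (isClosed_setOf_support_subset s)).exists_isMaxOn ⟨_, hcz⟩
    (continuous_id.dotProduct (continuous_const.matrix_mulVec continuous_id)).continuousOn
  have hQw : 0 ≤ w ⬝ᵥ G *ᵥ w := by
    refine le_trans ?_ (isMaxOn_iff.1 hmax _ hcz)
    show 0 ≤ (c • z) ⬝ᵥ G *ᵥ (c • z)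
    simp only [mulVec_smul, dotProduct_smul, smul_dotProduct, smul_eq_mul]
    exact mul_nonneg hc.le (mul_nonneg hc.le hQ)
  refine ⟨w, hw.1.1, fun hw0 => ?_, hw.2,
    nonneg_mulVec_of_isMaxOn_stdSimplex hGs hG hw hmax hQw⟩
  simpa [hw0] using hw.1.2

def nefSubdivisors (G : Matrix ι ι ℝ) (A : ι → ℝ) : Set (ι → ℝ) :=
  Set.Icc 0 A ∩ {x | 0 ≤ G *ᵥ x}

theorem isCompact_nefSubdivisors (G : Matrix ι ι ℝ) (A : ι → ℝ) :
    IsCompact (nefSubdivisors G A) :=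
  isCompact_Icc.inter_right <|
    isClosed_le continuous_const (continuous_const.matrix_mulVec continuous_id)

theorem not_isMaxOn_sum_nefSubdivisors {G : Matrix ι ι ℝ} {A b z : ι → ℝ}
    (hb : b ∈ nefSubdivisors G A) (hz : 0 ≤ z) (hz0 : z ≠ 0) (hzA : ∀ i, z i ≠ 0 → b i < A i)
    (hGz : ∀ k, 0 ≤ (G *ᵥ z) k ∨ 0 < (G *ᵥ b) k) :
    ¬IsMaxOn (fun x => ∑ i, x i) (nefSubdivisors G A) b := by
  intro hmax
  have hle : ∀ᶠ ε in 𝓝[>] (0 : ℝ), ∀ i, b i + ε * z i ≤ A i := eventually_all.2 fun i => by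
    by_cases hi : z i = 0
    · exact Eventually.of_forall fun ε => by simpa [hi] using hb.1.2 i
    · exact ((tendsto_add_mul_nhdsGT _ _).eventually_lt_const (hzA i hi)).mono fun _ => le_of_lt
  have hnef : ∀ᶠ ε in 𝓝[>] (0 : ℝ), ∀ k, 0 ≤ (G *ᵥ b) k + ε * (G *ᵥ z) k :=
    eventually_all.2 fun k => by
      rcases hGz k with h | h
      · filter_upwards [self_mem_nhdsWithin] with ε hε
        exact add_nonneg (hb.2 k) (mul_nonneg (le_of_lt hε) h)
      · exact ((tendsto_add_mul_nhdsGT _ _).eventually_const_lt h).mono fun _ => le_of_lt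
  obtain ⟨ε, hε, hεle, hεnef⟩ :=
    ((eventually_mem_nhdsWithin (a := (0 : ℝ)) (s := Set.Ioi 0)).and (hle.and hnef)).exists
  have hεT : b + ε • z ∈ nefSubdivisors G A := by
    refine ⟨⟨add_nonneg hb.1.1 (smul_nonneg (le_of_lt hε) hz), hεle⟩, fun k => ?_⟩
    simpa [mulVec_add, mulVec_smul] using hεnef k
  have := isMaxOn_iff.1 hmax _ hεT
  simp only [Pi.add_apply, Pi.smul_apply, smul_eq_mul, Finset.sum_add_distrib,
    ← Finset.mul_sum] at this
  linarith [mul_pos (show (0 : ℝ) < ε from hε) (Fintype.sum_pos (hz.lt_of_ne' hz0))]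

theorem exists_isZariskiDecomposition_real {G : Matrix ι ι ℝ} (hGs : G.IsSymm)
    (hG : ∀ i j, i ≠ j → 0 ≤ G i j) {A : ι → ℝ} (hA : 0 ≤ A) :
    ∃ P N, G.IsZariskiDecomposition A P N := by
  classical
  obtain ⟨b, hbT, hmax⟩ := (isCompact_nefSubdivisors G A).exists_isMaxOn
    ⟨0, ⟨le_rfl, hA⟩, by simp⟩ (continuous_finsetSum _ fun i _ => continuous_apply i).continuousOn
  have hslack : ∀ j, b j < A j → (G *ᵥ b) j = 0 := fun j hj => by
    by_contra hne
    refine not_isMaxOn_sum_nefSubdivisors hbT (z := Pi.single j 1)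
      (Pi.single_nonneg.2 zero_le_one) (Pi.single_ne_zero_iff.2 one_ne_zero) (fun i hi => ?_)
      (fun k => ?_) hmax
    · rcases eq_or_ne i j with rfl | hij
      · exact hj
      · simp [hij] at hi
    · rcases eq_or_ne k j with rfl | hkj
      · exact Or.inr ((hbT.2 k).lt_of_ne' hne)
      · exact Or.inl (by simpa [mulVec_single_one] using hG k j hkj)
  have hneg : G.NegDefOn {j | b j < A j} := negDefOn_of_nonneg hG fun z hz hzs hz0 => by
    by_contra hQ
    obtain ⟨w, hw, hw0, hws, hGw⟩ :=
      exists_nonneg_ne_zero_nonneg_mulVec hGs hG hz hz0 hzs (not_lt.1 hQ)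
    exact not_isMaxOn_sum_nefSubdivisors hbT hw hw0 hws (fun k => Or.inl (hGw k)) hmax
  refine ⟨b, A - b, hbT.1.1, sub_nonneg.2 hbT.1.2, add_sub_cancel b A, hbT.2,
    by simpa [sub_pos] using hneg, ?_⟩
  rw [hGs.dotProduct_mulVec_comm]
  refine Finset.sum_eq_zero fun j _ => ?_
  rcases (hbT.1.2 j).lt_or_eq with hj | hj
  · simp [hslack j hj]
  · simp [hj]

theorem NegDefOn.exists_eqOn_compl_mulVec_eqOn_zero [Field K] [PartialOrder K]
    {G : Matrix ι ι K} {s : Set ι} (h : G.NegDefOn s) (c : ι → K) :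
    ∃ v : ι → K, (∀ i ∉ s, v i = c i) ∧ ∀ i ∈ s, (G *ᵥ v) i = 0 := by
  classical
  set M : Matrix ι ι K := of fun j i => if j ∈ s then G j i else (1 : Matrix ι ι K) j i
  have hM : ∀ x j, (M *ᵥ x) j = if j ∈ s then (G *ᵥ x) j else x j := fun x j => by
    by_cases hj : j ∈ s
    · simp [M, hj, mulVec, dotProduct]
    · simp [M, hj, mulVec, dotProduct, one_apply]
  have hinj : Function.Injective M.mulVec := fun x y hxy =>
    h.eq_of_eqOn_compl_of_mulVec_eqOn (fun i hi => by simpa [hM, hi] using congrFun hxy i)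
      (fun i hi => by simpa [hM, hi] using congrFun hxy i)
  obtain ⟨v, hv⟩ := mulVec_surjective_iff_isUnit.2 (mulVec_injective_iff_isUnit.1 hinj)
    fun j => if j ∈ s then 0 else c j
  exact ⟨v, fun i hi => by simpa [hM, hi] using congrFun hv i,
    fun i hi => by simpa [hM, hi] using congrFun hv i⟩

section RatCast

variable [Field K] [LinearOrder K] [IsStrictOrderedRing K]

theorem ratCast_mulVec (G : Matrix ι ι ℚ) (x : ι → ℚ) (i : ι) :
    (((G *ᵥ x) i : ℚ) : K) = (G.map ((↑) : ℚ → K) *ᵥ fun j => (x j : K)) i := by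
  simp [mulVec, dotProduct]

theorem ratCast_dotProduct_mulVec (G : Matrix ι ι ℚ) (x y : ι → ℚ) :
    ((x ⬝ᵥ G *ᵥ y : ℚ) : K) = (fun i => (x i : K)) ⬝ᵥ G.map (↑) *ᵥ fun i => (y i : K) := by
  simp [dotProduct, ratCast_mulVec]

theorem NegDefOn.of_map_ratCast {G : Matrix ι ι ℚ} {s : Set ι} (h : (G.map ((↑) : ℚ → K)).NegDefOn s) :
    G.NegDefOn s := fun x hx hx0 => by
  have := h (fun i => (x i : K)) (fun i hi => hx i (by exact_mod_cast hi))
    fun h0 => hx0 (funext fun i => Rat.cast_eq_zero.1 (congrFun h0 i))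
  rw [← ratCast_dotProduct_mulVec] at this
  exact_mod_cast this

theorem IsZariskiDecomposition.of_map_ratCast {G : Matrix ι ι ℚ} {a P N : ι → ℚ}
    (h : (G.map ((↑) : ℚ → K)).IsZariskiDecomposition (fun i => (a i : K)) (fun i => (P i : K))
      (fun i => (N i : K))) :
    G.IsZariskiDecomposition a P N where
  nonneg_left i := Rat.cast_nonneg.1 (h.nonneg_left i)
  nonneg_right i := Rat.cast_nonneg.1 (h.nonneg_right i)
  add_eq := funext fun i => Rat.cast_injective (α := K) <| by
    rw [Pi.add_apply, Rat.cast_add]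
    exact congrFun h.add_eq i
  nef i := by
    have := h.nef i
    rw [Pi.zero_apply, ← ratCast_mulVec] at this
    exact_mod_cast this
  negDefOn := NegDefOn.of_map_ratCast (K := K) <| by simpa using h.negDefOn
  orthogonal := by
    have := h.orthogonal
    rw [← ratCast_dotProduct_mulVec] at this
    exact_mod_cast this

end RatCast

theorem exists_isZariskiDecomposition_rat {G : Matrix ι ι ℚ} (hGs : G.IsSymm)
    (hG : ∀ i j, i ≠ j → 0 ≤ G i j) {A : ι → ℚ} (hA : 0 ≤ A) :
    ∃ P N, G.IsZariskiDecomposition A P N := by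
  obtain ⟨P, N, h⟩ := exists_isZariskiDecomposition_real (G := G.map ((↑) : ℚ → ℝ))
    (hGs.map _) (fun i j hij => by simpa using hG i j hij) (A := fun i => (A i : ℝ))
    (fun i => by simpa using hA i)
  obtain ⟨v, hv_compl, hv⟩ :=
    (NegDefOn.of_map_ratCast h.negDefOn).exists_eqOn_compl_mulVec_eqOn_zero A
  have hPv : P = fun i => (v i : ℝ) := by
    refine h.negDefOn.eq_of_eqOn_compl_of_mulVec_eqOn (fun i hi => ?_) (fun i hi => ?_)
    · have hNi : N i = 0 := le_antisymm (not_lt.1 hi) (h.nonneg_right i)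
      have := congrFun h.add_eq i
      simp only [Pi.add_apply, hNi, add_zero] at this
      rw [this, hv_compl i hi]
    · rw [h.mulVec_apply_eq_zero (hGs.map _) hi, ← ratCast_mulVec, hv i hi, Rat.cast_zero]
  have hNv : N = fun i => ((A - v) i : ℝ) := by
    rw [eq_sub_of_add_eq' h.add_eq, hPv]
    ext i
    simp
  exact ⟨v, A - v, IsZariskiDecomposition.of_map_ratCast (K := ℝ) (hPv ▸ hNv ▸ h)⟩

end Matrix

section GramMatrix

variable {ι K M : Type*} [Fintype ι] [CommRing K] [AddCommGroup M] [Module K M]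

theorem LinearMap.apply_sum_smul_sum_smul (q : M →ₗ[K] M →ₗ[K] K) (D : ι → M) (x y : ι → K) :
    q (∑ i, x i • D i) (∑ j, y j • D j) = x ⬝ᵥ (of fun i j => q (D i) (D j)) *ᵥ y := by
  simp only [map_sum, map_smul, LinearMap.sum_apply, LinearMap.smul_apply, smul_eq_mul,
    dotProduct, mulVec, of_apply, Finset.mul_sum]
  rw [Finset.sum_comm]
  exact Finset.sum_congr rfl fun i _ => Finset.sum_congr rfl fun j _ => by ring

theorem LinearMap.apply_sum_smul_apply (q : M →ₗ[K] M →ₗ[K] K) (hsymm : ∀ x y, q x y = q y x)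
    (D : ι → M) (x : ι → K) (j : ι) :
    q (∑ i, x i • D i) (D j) = ((of fun i j => q (D i) (D j)) *ᵥ x) j := by
  simp [dotProduct, mulVec, hsymm _ (D j), mul_comm]

theorem Matrix.sum_sum_mul_mul_eq_dotProduct_mulVec (g : ι → ι → K) (x : ι → K) :
    ∑ i, ∑ j, x i * x j * g i j = x ⬝ᵥ of g *ᵥ x := by
  simp [dotProduct, mulVec, Finset.mul_sum, mul_comm, mul_left_comm]

theorem LinearMap.isZariskiDecomposition_gram_iff [PartialOrder K] (q : M →ₗ[K] M →ₗ[K] K)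
    (hsymm : ∀ x y, q x y = q y x) {D : ι → M} (hind : LinearIndependent K D) (a P N : ι → K) :
    (of fun i j => q (D i) (D j)).IsZariskiDecomposition a P N ↔
      (∀ i, 0 ≤ P i) ∧ (∀ i, 0 ≤ N i) ∧
      (∑ i, a i • D i) = (∑ i, P i • D i) + (∑ i, N i • D i) ∧
      (∀ j, 0 ≤ q (∑ i, P i • D i) (D j)) ∧
      (∀ x : ι → K, (∀ i, x i ≠ 0 → 0 < N i) → x ≠ 0 →
        (∑ i, ∑ j, x i * x j * q (D i) (D j)) < 0) ∧
      q (∑ i, P i • D i) (∑ i, N i • D i) = 0 := by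
  have hsum : (∑ i, P i • D i) + (∑ i, N i • D i) = ∑ i, (P + N) i • D i := by
    simp [add_smul, Finset.sum_add_distrib]
  simp only [q.apply_sum_smul_apply hsymm, q.apply_sum_smul_sum_smul, hsum,
    sum_sum_mul_mul_eq_dotProduct_mulVec fun i j => q (D i) (D j)]
  constructor
  · rintro ⟨hP, hN, hPN, hnef, hneg, horth⟩
    exact ⟨hP, hN, by rw [hPN], hnef, hneg, horth⟩
  · rintro ⟨hP, hN, hPN, hnef, hneg, horth⟩
    refine ⟨hP, hN, (hind.fintypeLinearCombination_injective ?_).symm, hnef, hneg, horth⟩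
    simpa [Fintype.linearCombination_apply] using hPN

end GramMatrix

theorem stmt_6 {V : Type*} [AddCommGroup V] [Module ℚ V]
    (q : V →ₗ[ℚ] V →ₗ[ℚ] ℚ) (hsymm : ∀ x y, q x y = q y x)
    {m : ℕ} (D : Fin m → V) (hind : LinearIndependent ℚ D)
    (hD : ∀ i j, i ≠ j → 0 ≤ q (D i) (D j))
    (a : Fin m → ℚ) (ha : ∀ i, 0 < a i) :
    ∃! p : (Fin m → ℚ) × (Fin m → ℚ),
      (∀ i, 0 ≤ p.1 i) ∧ (∀ i, 0 ≤ p.2 i) ∧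
      (∑ i, a i • D i) = (∑ i, p.1 i • D i) + (∑ i, p.2 i • D i) ∧
      (∀ j, 0 ≤ q (∑ i, p.1 i • D i) (D j)) ∧
      (∀ x : Fin m → ℚ, (∀ i, x i ≠ 0 → 0 < p.2 i) → x ≠ 0 →
        (∑ i, ∑ j, x i * x j * q (D i) (D j)) < 0) ∧
      q (∑ i, p.1 i • D i) (∑ i, p.2 i • D i) = 0 := by
  set G : Matrix (Fin m) (Fin m) ℚ := Matrix.of fun i j => q (D i) (D j)
  have hGs : G.IsSymm := Matrix.IsSymm.ext fun i j => hsymm (D j) (D i)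
  obtain ⟨P, N, h⟩ := Matrix.exists_isZariskiDecomposition_rat hGs hD fun i => (ha i).le
  refine ⟨(P, N), (q.isZariskiDecomposition_gram_iff hsymm hind a P N).1 h, fun p hp => ?_⟩
  obtain ⟨hP, hN⟩ := ((q.isZariskiDecomposition_gram_iff hsymm hind a p.1 p.2).2 hp).unique hGs hD h
  exact Prod.ext hP hN
end

section
/- In the setting of the abstract Zariski decomposition: let q be a symmetric bilinear form on a rational vector space, D_1,...,D_m with q(D_i,D_j) ≥ 0 for i≠j, D = ∑ a_i D_i with a_i > 0, and M = {(b_1,...,b_m) ∈ [0,a_1]×...×[0,a_m] : q(∑ b_i D_i, D_j) ≥ 0 for all j}. Then M has a unique maximal element with respect to the coordinatewise partial order, and this element has rational coordinates. -/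
/-!
Writing `Q i j = q (D i) (D j)`, the set `M` is cut out of the box `∏ [0, a i]` by the
inequalities `∑ i, b i * Q i j ≥ 0`. It contains `0`, is closed and bounded, and is closed under
coordinatewise `max` because the off-diagonal entries of `Q` are nonnegative; hence its
supremum lies in it and is its greatest element.

For rationality, fix a `ℚ`-linear retraction `π : ℝ → ℚ`. At the greatest element `b`, any
direction `v` that vanishes on all constraints active at `b` can be followed a little in both
directions, so maximality forces `v = 0`. The active constraints have rational coefficients and
rational right-hand sides, so they are preserved by applying `π` coordinatewise; thus
`π ∘ b - b` is such a direction and `b = π ∘ b`.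
-/

open Filter Topology

theorem IsLUB.mem_of_supClosed_of_isClosed {α : Type*} [SemilatticeSup α] [TopologicalSpace α]
    [SupConvergenceClass α] {s : Set α} {a : α} (ha : IsLUB s a) (hs : s.Nonempty)
    (hsup : SupClosed s) (hcl : IsClosed s) : a ∈ s := by
  have : Nonempty s := hs.to_subtype
  have : IsDirectedOrder s := directedOn_iff_isDirectedOrder.1 hsup.directedOn
  exact hcl.mem_of_tendsto (SupConvergenceClass.tendsto_coe_atTop_isLUB a s ha)
    (Eventually.of_forall Subtype.prop)

theorem exists_ratLinearMap_real_apply_ratCast :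
    ∃ π : ℝ →ₗ[ℚ] ℚ, ∀ r : ℚ, π r = r := by
  obtain ⟨π, hπ⟩ := (Algebra.linearMap ℚ ℝ).exists_leftInverse_of_injective
    (LinearMap.ker_eq_bot.2 (Rat.cast_injective (α := ℝ)))
  exact ⟨π, fun r => LinearMap.congr_fun hπ r⟩

theorem eventually_nonneg_add_mul {c w : ℝ} (hc : 0 ≤ c) (hw : c = 0 → w = 0) :
    ∀ᶠ t in 𝓝 (0 : ℝ), 0 ≤ c + t * w := by
  rcases hc.eq_or_lt with rfl | hc
  · simp [hw rfl]
  · have : Tendsto (fun t : ℝ => c + t * w) (𝓝 0) (𝓝 c) :=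
      (by fun_prop : Continuous fun t : ℝ => c + t * w).tendsto' 0 c (by simp)
    exact (this.eventually (eventually_gt_nhds hc)).mono fun _ => le_of_lt

section ZariskiSet

variable {ι : Type*} [Fintype ι] (Q : ι → ι → ℝ) (a : ι → ℝ)

def zariskiSet : Set (ι → ℝ) :=
  {b | (∀ i, b i ∈ Set.Icc 0 (a i)) ∧ ∀ j, 0 ≤ ∑ i, b i * Q i j}

variable {Q a}

theorem isClosed_zariskiSet : IsClosed (zariskiSet Q a) := by
  simp only [zariskiSet, Set.ofPred_and, Set.ofPred_forall]
  exact (isClosed_iInter fun i => isClosed_Icc.preimage (continuous_apply i)).inter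
    (isClosed_iInter fun j => isClosed_le continuous_const (by fun_prop))

theorem zero_mem_zariskiSet (ha : 0 ≤ a) : 0 ∈ zariskiSet Q a :=
  ⟨fun i => ⟨le_rfl, ha i⟩, fun j => by simp⟩

theorem bddAbove_zariskiSet : BddAbove (zariskiSet Q a) :=
  ⟨a, fun _ hb i => (hb.1 i).2⟩

theorem sum_mul_le_sum_mul_of_le_of_eq (hQ : ∀ i j, i ≠ j → 0 ≤ Q i j) {x y : ι → ℝ}
    (hxy : x ≤ y) {j : ι} (hj : x j = y j) : ∑ i, x i * Q i j ≤ ∑ i, y i * Q i j := by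
  refine Finset.sum_le_sum fun i _ => ?_
  rcases eq_or_ne i j with rfl | hij
  · rw [hj]
  · exact mul_le_mul_of_nonneg_right (hxy i) (hQ i j hij)

theorem supClosed_zariskiSet (hQ : ∀ i j, i ≠ j → 0 ≤ Q i j) : SupClosed (zariskiSet Q a) := by
  intro b hb c hc
  refine ⟨fun i => ⟨(hb.1 i).1.trans le_sup_left, sup_le (hb.1 i).2 (hc.1 i).2⟩, fun j => ?_⟩
  rcases le_total (c j) (b j) with hcb | hbc
  · exact (hb.2 j).trans
      (sum_mul_le_sum_mul_of_le_of_eq hQ le_sup_left (sup_eq_left.2 hcb).symm)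
  · exact (hc.2 j).trans
      (sum_mul_le_sum_mul_of_le_of_eq hQ le_sup_right (sup_eq_right.2 hbc).symm)

theorem exists_isGreatest_zariskiSet (hQ : ∀ i j, i ≠ j → 0 ≤ Q i j) (ha : 0 ≤ a) :
    ∃ b, IsGreatest (zariskiSet Q a) b := by
  have hne : (zariskiSet Q a).Nonempty := ⟨0, zero_mem_zariskiSet ha⟩
  have hlub := isLUB_csSup hne bddAbove_zariskiSet
  exact ⟨_, hlub.mem_of_supClosed_of_isClosed hne (supClosed_zariskiSet hQ) isClosed_zariskiSet,
    hlub.1⟩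

theorem eventually_add_smul_mem_zariskiSet {b v : ι → ℝ} (hb : b ∈ zariskiSet Q a)
    (hv₀ : ∀ i, b i = 0 → v i = 0) (hva : ∀ i, b i = a i → v i = 0)
    (hvQ : ∀ j, ∑ i, b i * Q i j = 0 → ∑ i, v i * Q i j = 0) :
    ∀ᶠ t in 𝓝 (0 : ℝ), b + t • v ∈ zariskiSet Q a := by
  have hlower i : ∀ᶠ t in 𝓝 (0 : ℝ), 0 ≤ b i + t * v i :=
    eventually_nonneg_add_mul (hb.1 i).1 (hv₀ i)
  have hupper i : ∀ᶠ t in 𝓝 (0 : ℝ), 0 ≤ (a i - b i) + t * -v i :=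
    eventually_nonneg_add_mul (sub_nonneg.2 (hb.1 i).2)
      fun h => neg_eq_zero.2 (hva i (sub_eq_zero.1 h).symm)
  have hform j : ∀ᶠ t in 𝓝 (0 : ℝ), 0 ≤ ∑ i, b i * Q i j + t * ∑ i, v i * Q i j :=
    eventually_nonneg_add_mul (hb.2 j) (hvQ j)
  filter_upwards [eventually_all.2 hlower, eventually_all.2 hupper, eventually_all.2 hform]
    with t hl hu hf
  refine ⟨fun i => ⟨hl i, ?_⟩, fun j => ?_⟩
  · simp only [Pi.add_apply, Pi.smul_apply, smul_eq_mul]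
    linarith [hu i]
  simpa [add_mul, Finset.sum_add_distrib, Finset.mul_sum, mul_assoc] using hf j

theorem IsGreatest.eq_zero_of_zariskiSet {b v : ι → ℝ} (hb : IsGreatest (zariskiSet Q a) b)
    (hv₀ : ∀ i, b i = 0 → v i = 0) (hva : ∀ i, b i = a i → v i = 0)
    (hvQ : ∀ j, ∑ i, b i * Q i j = 0 → ∑ i, v i * Q i j = 0) : v = 0 := by
  obtain ⟨ε, hε, hball⟩ := Metric.eventually_nhds_iff.1
    (eventually_add_smul_mem_zariskiSet hb.1 hv₀ hva hvQ)
  have hmem (t : ℝ) (ht : |t| < ε) : t • v ≤ 0 := by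
    have := hb.2 (hball (y := t) (by rwa [Real.dist_0_eq_abs]))
    simpa using this
  have hpos := hmem (ε / 2) (by rw [abs_of_pos (by positivity)]; linarith)
  have hneg := hmem (-(ε / 2)) (by rw [abs_neg, abs_of_pos (by positivity)]; linarith)
  funext i
  have h1 := hpos i
  have h2 := hneg i
  simp only [Pi.smul_apply, smul_eq_mul, Pi.zero_apply] at h1 h2 ⊢
  nlinarith

end ZariskiSet

theorem IsGreatest.exists_rat_of_zariskiSet {ι : Type*} [Fintype ι] {r : ι → ι → ℚ}
    {a : ι → ℚ} {b : ι → ℝ}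
    (hb : IsGreatest (zariskiSet (fun i j => (r i j : ℝ)) (fun i => (a i : ℝ))) b) (i : ι) :
    ∃ s : ℚ, b i = s := by
  obtain ⟨π, hπ⟩ := exists_ratLinearMap_real_apply_ratCast
  have hfix {x : ℝ} {s : ℚ} (h : x = s) : (π x : ℝ) - x = 0 := by rw [h, hπ, sub_self]
  have hsum j : ∑ i, (π (b i) : ℝ) * r i j = π (∑ i, b i * r i j) := by
    rw [map_sum, Rat.cast_sum]
    refine Finset.sum_congr rfl fun i _ => ?_
    rw [mul_comm (b i), ← Rat.smul_def (r i j) (b i), map_smul, smul_eq_mul, Rat.cast_mul, mul_comm]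
  have hv := hb.eq_zero_of_zariskiSet (v := fun i => (π (b i) : ℝ) - b i)
    (fun i h => hfix (h.trans Rat.cast_zero.symm)) (fun i h => hfix h) fun j h => by
      simp only [sub_mul, Finset.sum_sub_distrib, hsum, h, map_zero, Rat.cast_zero, sub_zero]
  exact ⟨π (b i), (sub_eq_zero.1 (congrFun hv i)).symm⟩

theorem stmt_7_general {V : Type*} [AddCommGroup V] [Module ℝ V]
    (q : V →ₗ[ℝ] V →ₗ[ℝ] ℝ)
    {m : ℕ} (D : Fin m → V) (hD : ∀ i j, i ≠ j → 0 ≤ q (D i) (D j))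
    (hrat : ∀ i j, ∃ r : ℚ, q (D i) (D j) = (r : ℝ))
    (a : Fin m → ℚ) (ha : ∀ i, 0 < a i)
    (M : Set (Fin m → ℝ))
    (hM : M = {b : Fin m → ℝ | (∀ i, b i ∈ Set.Icc (0 : ℝ) ((a i : ℝ))) ∧
      ∀ j, 0 ≤ q (∑ i, b i • D i) (D j)}) :
    (∃! b : Fin m → ℝ, b ∈ M ∧ ∀ b' ∈ M, b' ≤ b) ∧
    (∀ b : Fin m → ℝ, b ∈ M → (∀ b' ∈ M, b' ≤ b) →
      ∀ i, ∃ r : ℚ, b i = (r : ℝ)) := by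
  choose r hr using hrat
  have hMQ : M = zariskiSet (fun i j => (r i j : ℝ)) (fun i => (a i : ℝ)) := by
    simp [hM, zariskiSet, map_sum, hr]
  subst hMQ
  obtain ⟨b, hb⟩ := exists_isGreatest_zariskiSet (fun i j hij => hr i j ▸ hD i j hij)
    fun i => show (0 : ℝ) ≤ a i by exact_mod_cast (ha i).le
  exact ⟨⟨b, hb, fun _ hb' => IsGreatest.unique hb' hb⟩,
    fun _ hbM hbmax => IsGreatest.exists_rat_of_zariskiSet ⟨hbM, hbmax⟩⟩

theorem stmt_7 {V : Type*} [AddCommGroup V] [Module ℝ V]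
    (q : V →ₗ[ℝ] V →ₗ[ℝ] ℝ) (hsymm : ∀ x y, q x y = q y x)
    {m : ℕ} (D : Fin m → V) (hD : ∀ i j, i ≠ j → 0 ≤ q (D i) (D j))
    (hrat : ∀ i j, ∃ r : ℚ, q (D i) (D j) = (r : ℝ))
    (a : Fin m → ℚ) (ha : ∀ i, 0 < a i)
    (M : Set (Fin m → ℝ))
    (hM : M = {b : Fin m → ℝ | (∀ i, b i ∈ Set.Icc (0 : ℝ) ((a i : ℝ))) ∧
      ∀ j, 0 ≤ q (∑ i, b i • D i) (D j)}) :
    (∃! b : Fin m → ℝ, b ∈ M ∧ ∀ b' ∈ M, b' ≤ b) ∧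
    (∀ b : Fin m → ℝ, b ∈ M → (∀ b' ∈ M, b' ≤ b) →
      ∀ i, ∃ r : ℚ, b i = (r : ℝ)) :=
  stmt_7_general q D hD hrat a ha M hM
end

section
/- Let q be a symmetric bilinear form on a rational vector space, D_1,...,D_m with q(D_i, D_j) ≥ 0 for i ≠ j, and D = ∑ a_i D_i with a_i > 0. Let P = ∑ b_i D_i where (b_i) is the maximal element of the set M = {(b_i) ∈ ∏[0,a_i] : q(∑ b_i D_i, D_j) ≥ 0 ∀ j}, and write N = D − P = ∑ c_i D_i with c_i ≥ 0. Then q(P, D_i) = 0 for every index i with c_i > 0; in particular q(P, N) = 0. -/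
theorem stmt_8 {V : Type*} [AddCommGroup V] [Module ℚ V]
    (q : V →ₗ[ℚ] V →ₗ[ℚ] ℚ) (hsymm : ∀ x y, q x y = q y x)
    {m : ℕ} (D : Fin m → V) (hD : ∀ i j, i ≠ j → 0 ≤ q (D i) (D j))
    (a : Fin m → ℚ) (ha : ∀ i, 0 < a i)
    (M : Set (Fin m → ℚ))
    (hM : M = {b : Fin m → ℚ | (∀ i, 0 ≤ b i ∧ b i ≤ a i) ∧
      ∀ j, 0 ≤ q (∑ i, b i • D i) (D j)})
    (b : Fin m → ℚ) (hb : b ∈ M) (hmax : ∀ b' ∈ M, ∀ i, b' i ≤ b i) :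
    (∀ i, 0 < a i - b i → q (∑ j, b j • D j) (D i) = 0) ∧
    q (∑ i, b i • D i) (∑ i, (a i - b i) • D i) = 0 := by
  subst hM
  obtain ⟨hrange, hpos⟩ := hb
  have key : ∀ i, 0 < a i - b i → q (∑ j, b j • D j) (D i) = 0 := by
    intro i hci
    by_contra hne
    have hQ : 0 < q (∑ j, b j • D j) (D i) := lt_of_le_of_ne (hpos i) (Ne.symm hne)
    set Q := q (∑ j, b j • D j) (D i) with hQdef
    set c := q (D i) (D i) with hcdef
    have hden : (0:ℚ) < 1 + |c| := by positivity
    set ε : ℚ := min (a i - b i) (Q / (1 + |c|)) with hεdef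
    have hε : 0 < ε := lt_min hci (div_pos hQ hden)
    have hε1 : ε ≤ a i - b i := min_le_left _ _
    have hε2 : ε * (1 + |c|) ≤ Q := by
      have := min_le_right (a i - b i) (Q / (1 + |c|))
      calc ε * (1 + |c|) ≤ (Q / (1 + |c|)) * (1 + |c|) := by
            exact mul_le_mul_of_nonneg_right this hden.le
        _ = Q := div_mul_cancel₀ _ hden.ne'
    set b' : Fin m → ℚ := Function.update b i (b i + ε) with hb'def
    have hsum : ∑ k, b' k • D k = (∑ k, b k • D k) + ε • D i := by
      have h1 : ∀ k, b' k • D k = b k • D k + (if k = i then ε • D i else 0) := by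
        intro k
        by_cases h : k = i
        · subst h; simp [hb'def, add_smul]
        · simp only [hb'def, Function.update_of_ne h, if_neg h, add_zero]
      simp only [h1, Finset.sum_add_distrib, Finset.sum_ite_eq' Finset.univ i]
      simp
    have hb'M : b' ∈ {b : Fin m → ℚ | (∀ i, 0 ≤ b i ∧ b i ≤ a i) ∧
        ∀ j, 0 ≤ q (∑ i, b i • D i) (D j)} := by
      refine ⟨fun k => ?_, fun j => ?_⟩
      · by_cases h : k = i
        · subst h
          constructor
          · simp only [hb'def, Function.update_self]
            have := (hrange k).1; linarith
          · simp only [hb'def, Function.update_self]; linarith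
        · rw [hb'def, Function.update_of_ne h]; exact hrange k
      · rw [hsum]
        simp only [map_add, map_smul, LinearMap.add_apply, LinearMap.smul_apply,
          smul_eq_mul]
        by_cases h : j = i
        · subst h
          have h1 : ε * c ≥ -(ε * |c|) := by
            have := neg_abs_le c
            nlinarith
          have h2 : ε * |c| ≤ Q - ε := by nlinarith
          rw [← hQdef, ← hcdef]
          linarith
        · have := hD i j (fun he => h he.symm)
          have := hpos j
          nlinarith
    have := hmax b' hb'M i
    rw [hb'def, Function.update_self] at this
    linarith
  refine ⟨key, ?_⟩
  rw [map_sum]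
  apply Finset.sum_eq_zero
  intro i _
  simp only [map_smul, smul_eq_mul]
  rcases lt_or_eq_of_le (sub_nonneg.mpr (hrange i).2) with h | h
  · rw [key i h, mul_zero]
  · rw [← h, zero_mul]
end

section
/- Let q be a symmetric bilinear form on a rational vector space, D_1,...,D_m with q(D_i, D_j) ≥ 0 for i ≠ j, D = ∑ a_i D_i with a_i > 0, P = ∑ b_i D_i the maximal element of M, and N = D − P with components N_1,...,N_n (those D_i appearing in N with positive coefficient). Then for every choice of nonnegative coefficients c_1,...,c_n not all zero, there exists an index j with q(∑_i c_i N_i, N_j) < 0. -/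
/-!
If `q(∑ cᵢ Nᵢ, N_j) ≥ 0` held for every component `N_j`, it would also hold against every other
`D_j`, since `c` vanishes there and `q(Dᵢ, D_j) ≥ 0` off the diagonal. Then `∑ bᵢ Dᵢ + ε ∑ cᵢ Dᵢ`
still pairs nonnegatively with every `D_j`, and for small `ε > 0` its coefficients stay below `a`,
so `b + ε c` would be an element of `M` strictly above the maximal element `b`.
-/

open Filter Topology

section ZariskiCandidates

variable {ι R V : Type*} [Fintype ι] [CommRing R] [LinearOrder R] [IsStrictOrderedRing R]
  [AddCommGroup V] [Module R V]

def zariskiCandidates (q : V →ₗ[R] V →ₗ[R] R) (D : ι → V) (a : ι → R) : Set (ι → R) :=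
  {b | (∀ i, 0 ≤ b i ∧ b i ≤ a i) ∧ ∀ j, 0 ≤ q (∑ i, b i • D i) (D j)}

theorem sum_smul_apply_nonneg_of_eq_zero (q : V →ₗ[R] V →ₗ[R] R) {D : ι → V}
    (hD : ∀ i j, i ≠ j → 0 ≤ q (D i) (D j)) {c : ι → R} (hc : ∀ i, 0 ≤ c i) {j : ι}
    (hcj : c j = 0) : 0 ≤ q (∑ i, c i • D i) (D j) := by
  simp only [map_sum, map_smul, LinearMap.sum_apply, LinearMap.smul_apply, smul_eq_mul]
  refine Finset.sum_nonneg fun i _ => ?_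
  rcases eq_or_ne i j with rfl | hij
  · simp [hcj]
  · exact mul_nonneg (hc i) (hD i j hij)

theorem add_smul_mem_zariskiCandidates {q : V →ₗ[R] V →ₗ[R] R} {D : ι → V} {a b c : ι → R}
    (hb : b ∈ zariskiCandidates q D a) (hc : ∀ i, 0 ≤ c i)
    (hqc : ∀ j, 0 ≤ q (∑ i, c i • D i) (D j)) {ε : R} (hε : 0 ≤ ε)
    (hεc : ∀ i, b i + ε * c i ≤ a i) : b + ε • c ∈ zariskiCandidates q D a := by
  obtain ⟨hba, hqb⟩ := hb
  refine ⟨fun i => ⟨?_, hεc i⟩, fun j => ?_⟩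
  · simpa using add_nonneg (hba i).1 (mul_nonneg hε (hc i))
  · simp only [Pi.add_apply, Pi.smul_apply, smul_eq_mul, add_smul, mul_smul,
      Finset.sum_add_distrib, ← Finset.smul_sum, map_add, map_smul, LinearMap.add_apply,
      LinearMap.smul_apply]
    exact add_nonneg (hqb j) (mul_nonneg hε (hqc j))

end ZariskiCandidates

theorem exists_pos_forall_mul_lt {ι 𝕜 : Type*} [Finite ι] [Field 𝕜] [LinearOrder 𝕜]
    [IsStrictOrderedRing 𝕜] [TopologicalSpace 𝕜] [OrderTopology 𝕜] {c d : ι → 𝕜}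
    (hd : ∀ i, c i ≠ 0 → 0 < d i) : ∃ ε > 0, ∀ i, c i ≠ 0 → ε * c i < d i := by
  have hsmall : ∀ᶠ ε in 𝓝[>] (0 : 𝕜), ∀ i, c i ≠ 0 → ε * c i < d i := by
    refine eventually_all.2 fun i => ?_
    by_cases hci : c i = 0
    · exact .of_forall fun _ h => absurd hci h
    have hlim : Tendsto (fun ε : 𝕜 => ε * c i) (𝓝 0) (𝓝 0) := by
      simpa using (continuous_mul_const (c i)).tendsto (0 : 𝕜)
    exact nhdsWithin_le_nhds ((hlim.eventually (gt_mem_nhds (hd i hci))).mono fun _ h _ => h)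
  obtain ⟨ε, hε, hεpos⟩ := (hsmall.and self_mem_nhdsWithin).exists
  exact ⟨ε, hεpos, hε⟩

theorem eq_zero_of_forall_sum_smul_apply_nonneg {ι 𝕜 V : Type*} [Fintype ι] [Field 𝕜]
    [LinearOrder 𝕜] [IsStrictOrderedRing 𝕜] [TopologicalSpace 𝕜] [OrderTopology 𝕜]
    [AddCommGroup V] [Module 𝕜 V] {q : V →ₗ[𝕜] V →ₗ[𝕜] 𝕜} {D : ι → V} {a b c : ι → 𝕜}
    (hb : b ∈ zariskiCandidates q D a) (hmax : ∀ b' ∈ zariskiCandidates q D a, b' ≤ b)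
    (hc : ∀ i, 0 ≤ c i) (hsupp : ∀ i, c i ≠ 0 → b i < a i)
    (hqc : ∀ j, 0 ≤ q (∑ i, c i • D i) (D j)) : c = 0 := by
  obtain ⟨ε, hε, hεc⟩ := exists_pos_forall_mul_lt (d := a - b) fun i h => sub_pos.2 (hsupp i h)
  have hmem : b + ε • c ∈ zariskiCandidates q D a := by
    refine add_smul_mem_zariskiCandidates hb hc hqc hε.le fun i => ?_
    by_cases hci : c i = 0
    · simpa [hci] using hb.1 i |>.2
    · linarith [hεc i hci, show (a - b) i = a i - b i from rfl]
  funext i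
  have hle : b i + ε * c i ≤ b i := hmax _ hmem i
  exact le_antisymm (nonpos_of_mul_nonpos_right (by linarith) hε) (hc i)

theorem stmt_9_general {V : Type*} [AddCommGroup V] [Module ℚ V]
    (q : V →ₗ[ℚ] V →ₗ[ℚ] ℚ)
    {m : ℕ} (D : Fin m → V) (hD : ∀ i j, i ≠ j → 0 ≤ q (D i) (D j))
    (a : Fin m → ℚ)
    (M : Set (Fin m → ℚ))
    (hM : M = {b : Fin m → ℚ | (∀ i, 0 ≤ b i ∧ b i ≤ a i) ∧
      ∀ j, 0 ≤ q (∑ i, b i • D i) (D j)})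
    (b : Fin m → ℚ) (hb : b ∈ M) (hmax : ∀ b' ∈ M, ∀ i, b' i ≤ b i) :
    ∀ c : Fin m → ℚ, (∀ i, 0 ≤ c i) → (∀ i, c i ≠ 0 → 0 < a i - b i) →
      c ≠ 0 → ∃ j, 0 < a j - b j ∧ q (∑ i, c i • D i) (D j) < 0 := by
  intro c hc hsupp hc0
  by_contra! hcon
  subst hM
  refine hc0 (eq_zero_of_forall_sum_smul_apply_nonneg hb hmax hc
    (fun i h => sub_pos.1 (hsupp i h)) fun j => ?_)
  by_cases hj : 0 < a j - b j
  · exact hcon j hj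
  · exact sum_smul_apply_nonneg_of_eq_zero q hD hc (by_contra fun h => hj (hsupp j h))

theorem stmt_9 {V : Type*} [AddCommGroup V] [Module ℚ V]
    (q : V →ₗ[ℚ] V →ₗ[ℚ] ℚ) (hsymm : ∀ x y, q x y = q y x)
    {m : ℕ} (D : Fin m → V) (hD : ∀ i j, i ≠ j → 0 ≤ q (D i) (D j))
    (a : Fin m → ℚ) (ha : ∀ i, 0 < a i)
    (M : Set (Fin m → ℚ))
    (hM : M = {b : Fin m → ℚ | (∀ i, 0 ≤ b i ∧ b i ≤ a i) ∧
      ∀ j, 0 ≤ q (∑ i, b i • D i) (D j)})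
    (b : Fin m → ℚ) (hb : b ∈ M) (hmax : ∀ b' ∈ M, ∀ i, b' i ≤ b i) :
    ∀ c : Fin m → ℚ, (∀ i, 0 ≤ c i) → (∀ i, c i ≠ 0 → 0 < a i - b i) →
      c ≠ 0 → ∃ j, 0 < a j - b j ∧ q (∑ i, c i • D i) (D j) < 0 :=
  stmt_9_general q D hD a M hM b hb hmax
end

section
/- Let L be a nondegenerate integral lattice with symmetric bilinear form q, and let E ∈ L be a vector such that (i) either E is primitive or E/2 ∈ L is primitive, and (ii) the rational functional (−2/q(E,E))·q(E, ·) takes integer values on all of L. Let A_L = L^∨/L be the discriminant group of L. Then |q(E,E)| ≤ 4·|A_L|. -/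
open Matrix in
theorem stmt_12 {n : ℕ} (Q : Matrix (Fin n) (Fin n) ℤ) (hsymm : Q.IsSymm)
    (hdet : Q.det ≠ 0) (E : Fin n → ℤ)
    (hprim : (∀ s : ℤ, (∀ i, s ∣ E i) → IsUnit s) ∨
      ∃ D : Fin n → ℤ, E = (2 : ℤ) • D ∧ (∀ s : ℤ, (∀ i, s ∣ D i) → IsUnit s))
    (hint : ∀ x : Fin n → ℤ, (E ⬝ᵥ Q.mulVec E) ∣ 2 * (E ⬝ᵥ Q.mulVec x)) :
    |E ⬝ᵥ Q.mulVec E| ≤ 4 * |Q.det| := by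
  set c := E ⬝ᵥ Q.mulVec E with hc
  rcases eq_or_ne c 0 with h0 | h0
  · rw [h0, abs_zero]
    have : 0 < |Q.det| := abs_pos.mpr hdet
    linarith
  · -- coordinatewise divisibility
    have hdvd : ∀ i, c ∣ 2 * (Q.mulVec E) i := by
      intro i
      have h := hint (Pi.single i 1)
      rwa [dotProduct_mulVec, ← Matrix.mulVec_transpose, hsymm.eq,
        dotProduct_single, mul_one] at h
    choose w hw using hdvd
    have hcw : c • w = (2 : ℤ) • Q.mulVec E := by
      funext i
      simp only [Pi.smul_apply, smul_eq_mul]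
      rw [← hw i]
    -- the key identity
    have hu : Q.adjugate.mulVec (Q.mulVec E) = Q.det • E := by
      rw [Matrix.mulVec_mulVec, Matrix.adjugate_mul, Matrix.smul_mulVec,
        Matrix.one_mulVec]
    have key : c * (c * (w ⬝ᵥ Q.adjugate.mulVec w)) = c * (4 * Q.det) := by
      have h1 : (c • w) ⬝ᵥ Q.adjugate.mulVec (c • w)
          = c * (c * (w ⬝ᵥ Q.adjugate.mulVec w)) := by
        rw [Matrix.mulVec_smul, smul_dotProduct, dotProduct_smul]
        simp [mul_assoc]
      have h2 : ((2:ℤ) • Q.mulVec E) ⬝ᵥ Q.adjugate.mulVec ((2:ℤ) • Q.mulVec E)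
          = c * (4 * Q.det) := by
        rw [Matrix.mulVec_smul, smul_dotProduct, dotProduct_smul, hu,
          dotProduct_smul]
        have : Q.mulVec E ⬝ᵥ E = c := by rw [hc, dotProduct_comm]
        rw [this]
        simp only [smul_eq_mul]
        ring
      rw [← h1, hcw, h2]
    have key' : c * (w ⬝ᵥ Q.adjugate.mulVec w) = 4 * Q.det :=
      mul_left_cancel₀ h0 key
    have hdvd4 : c ∣ 4 * Q.det := ⟨_, key'.symm⟩
    have h4 : (4 : ℤ) * Q.det ≠ 0 := by
      exact mul_ne_zero (by norm_num) hdet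
    have := Int.le_of_dvd (abs_pos.mpr h4) ((abs_dvd _ _).mpr ((dvd_abs _ _).mpr hdvd4))
    rwa [abs_mul, show |(4:ℤ)| = 4 by norm_num] at this
end
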